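/- arXiv:1703.01955 — 2 statements merged into one kernel-verified Lean document; each statement's English description precedes it below -/
import Mathlib

section
/- For every n ∈ ℕ: t_3(4n) and t_3(4n+1) are odd (so ν₂(t_3(4n)) = ν₂(t_3(4n+1)) = 0), and ν₂(t_3(4n+3)) = ν₂(t_3(4n+6)) = 3 + ν₂(t_3(n)), the valuations being taken in ℕ ∪ {∞} with ν₂(0) = ∞ and with the convention t_3(k) = 0 for k < 0 in the last equality. -/
/-- The generating function `T(x) = ∑ (-1)^{s₂(n)} xⁿ = ∏ (1 - x^{2^j})`
of the Prouhet–Thue–Morse sequence. -/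
noncomputable def T : PowerSeries ℤ :=
  PowerSeries.mk fun n => (-1) ^ (Nat.digits 2 n).sum

/-!
From `T(x) = (1 - x) T(x²)` we get `T³ = (1 - x)³ T(x²)³`, and splitting
`(1 - x)³ = (1 + 3x²) - x (3 + x²)` into even and odd parts gives
`t₃(2n) = t₃(n) + 3 t₃(n - 1)` and `t₃(2n + 1) = -3 t₃(n) - t₃(n - 1)`, where `t₃(n - 1)` is
written `coeff n (X * T ^ 3)` so that it vanishes at `n = 0`. Two applications of these
recurrences give `t₃(4n + 3) = t₃(4n + 6) = 8 t₃(n)`.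
Modulo 2, `T = 1 / (1 - x)`, so `T³ = (1 - x) / (1 - x)⁴ = (1 - x) / (1 - x⁴)`, whose
coefficients at `4n` and `4n + 1` are `±1`.
-/

namespace PowerSeries

variable {R : Type*} [CommRing R] {p : ℕ} (hp : p ≠ 0) (g h : R⟦X⟧) (n : ℕ)

theorem coeff_mul_add_one_expand (hp1 : 1 < p) : coeff (p * n + 1) (expand p hp g) = 0 :=
  coeff_expand_of_not_dvd p hp g fun hdvd ↦
    hp1.ne' (Nat.dvd_one.mp ((Nat.dvd_add_right (dvd_mul_right p n)).mp hdvd))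

theorem coeff_mul_X_mul_expand (hp1 : 1 < p) : coeff (p * n) (X * expand p hp g) = 0 := by
  rcases n with _ | n
  · simp
  rw [show p * (n + 1) = p * n + (p - 1) + 1 by rw [mul_add_one]; omega, coeff_succ_X_mul,
    coeff_expand_of_not_dvd]
  intro hdvd
  have := Nat.le_of_dvd (by omega) ((Nat.dvd_add_right (dvd_mul_right p n)).mp hdvd)
  omega

theorem coeff_mul_expand_add_X_mul_expand (hp1 : 1 < p) :
    coeff (p * n) (expand p hp g + X * expand p hp h) = coeff n g := by
  rw [map_add, coeff_expand_mul, coeff_mul_X_mul_expand hp _ _ hp1, add_zero]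

theorem coeff_mul_add_one_expand_add_X_mul_expand (hp1 : 1 < p) :
    coeff (p * n + 1) (expand p hp g + X * expand p hp h) = coeff n h := by
  rw [map_add, coeff_mul_add_one_expand hp _ _ hp1, coeff_succ_X_mul, coeff_expand_mul, zero_add]

end PowerSeries

open PowerSeries

theorem coeff_T_two_mul (n : ℕ) : coeff (2 * n) T = coeff n T := by
  rcases Nat.eq_zero_or_pos n with rfl | hn
  · rfl
  simp only [T, coeff_mk, Nat.digits_def' one_lt_two (by omega : 0 < 2 * n),
    Nat.mul_mod_right, Nat.mul_div_cancel_left n two_pos, List.sum_cons, zero_add]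

theorem coeff_T_two_mul_add_one (n : ℕ) : coeff (2 * n + 1) T = -coeff n T := by
  have hmod : (2 * n + 1) % 2 = 1 := by omega
  have hdiv : (2 * n + 1) / 2 = n := by omega
  simp only [T, coeff_mk, Nat.digits_def' one_lt_two (Nat.succ_pos _), hmod, hdiv,
    List.sum_cons, pow_add, pow_one, neg_one_mul]

theorem T_eq_one_sub_X_mul_expand : T = (1 - X) * expand 2 two_ne_zero T := by
  have hsplit : (1 - X) * expand 2 two_ne_zero T =
      expand 2 two_ne_zero T + X * expand 2 two_ne_zero (-T) := by
    rw [map_neg]; ring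
  ext m
  rw [hsplit]
  obtain ⟨n, rfl | rfl⟩ := Nat.even_or_odd' m
  · rw [coeff_mul_expand_add_X_mul_expand _ _ _ _ one_lt_two, coeff_T_two_mul]
  · rw [coeff_mul_add_one_expand_add_X_mul_expand _ _ _ _ one_lt_two, coeff_T_two_mul_add_one,
      map_neg]

theorem T_cube_eq_expand_add_X_mul_expand :
    T ^ 3 = expand 2 two_ne_zero (T ^ 3 + 3 • (X * T ^ 3)) +
      X * expand 2 two_ne_zero (-(3 • T ^ 3) - X * T ^ 3) := by
  conv_lhs => rw [T_eq_one_sub_X_mul_expand]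
  simp only [map_add, map_sub, map_neg, map_nsmul, map_mul, map_pow, expand_X]
  ring

theorem coeff_two_mul_T_cube (n : ℕ) :
    coeff (2 * n) (T ^ 3) = coeff n (T ^ 3) + 3 * coeff n (X * T ^ 3) := by
  nth_rw 1 [T_cube_eq_expand_add_X_mul_expand]
  rw [coeff_mul_expand_add_X_mul_expand _ _ _ _ one_lt_two,
    map_add, map_nsmul, nsmul_eq_mul, Nat.cast_ofNat]

theorem coeff_two_mul_add_one_T_cube (n : ℕ) :
    coeff (2 * n + 1) (T ^ 3) = -(3 * coeff n (T ^ 3)) - coeff n (X * T ^ 3) := by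
  nth_rw 1 [T_cube_eq_expand_add_X_mul_expand]
  rw [coeff_mul_add_one_expand_add_X_mul_expand _ _ _ _ one_lt_two,
    map_sub, map_neg, map_nsmul, nsmul_eq_mul, Nat.cast_ofNat]

theorem coeff_four_mul_add_three_T_cube (n : ℕ) :
    coeff (4 * n + 3) (T ^ 3) = 2 ^ 3 * coeff n (T ^ 3) := by
  rw [show 4 * n + 3 = 2 * (2 * n + 1) + 1 by ring, coeff_two_mul_add_one_T_cube,
    coeff_succ_X_mul, coeff_two_mul_add_one_T_cube, coeff_two_mul_T_cube]
  ring

theorem coeff_four_mul_add_six_T_cube (n : ℕ) :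
    coeff (4 * n + 6) (T ^ 3) = 2 ^ 3 * coeff n (T ^ 3) := by
  rw [show 4 * n + 6 = 2 * (2 * (n + 1) + 1) by ring, coeff_two_mul_T_cube, coeff_succ_X_mul,
    coeff_two_mul_add_one_T_cube, coeff_two_mul_T_cube, coeff_succ_X_mul]
  ring

theorem map_T_zmod_two : map (Int.castRingHom (ZMod 2)) T = mk 1 := by
  ext n
  simp [T]

theorem map_T_cube_zmod_two :
    map (Int.castRingHom (ZMod 2)) (T ^ 3) =
      expand 4 four_ne_zero (mk 1) + X * expand 4 four_ne_zero (-mk 1) := by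
  set S : (ZMod 2)⟦X⟧ := mk 1
  have hS : S * (1 - X) = 1 := mk_one_mul_one_sub_eq_one _
  have hS4 : expand 4 four_ne_zero S * (1 - X ^ 4) = 1 := by
    simpa using congrArg (expand 4 four_ne_zero) hS
  have hfrob : (1 - X : (ZMod 2)⟦X⟧) ^ 4 = 1 - X ^ 4 := by
    have : CharP (ZMod 2)⟦X⟧ 2 :=
      charP_of_injective_algebraMap (algebraMap (ZMod 2) (ZMod 2)⟦X⟧).injective 2
    simpa using sub_pow_char_pow (1 : (ZMod 2)⟦X⟧) X 2 (p := 2)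
  calc map (Int.castRingHom (ZMod 2)) (T ^ 3) = S ^ 3 := by rw [map_pow, map_T_zmod_two]
    _ = S ^ 3 * (expand 4 four_ne_zero S * (1 - X ^ 4)) := by rw [hS4, mul_one]
    _ = (S * (1 - X)) ^ 3 * ((1 - X) * expand 4 four_ne_zero S) := by rw [← hfrob]; ring
    _ = expand 4 four_ne_zero S + X * expand 4 four_ne_zero (-S) := by rw [hS, map_neg]; ring

theorem odd_coeff_four_mul_T_cube (n : ℕ) : Odd (coeff (4 * n) (T ^ 3)) := by
  rw [← ZMod.intCast_eq_one_iff_odd, ← eq_intCast (Int.castRingHom (ZMod 2)), ← coeff_map,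
    map_T_cube_zmod_two, coeff_mul_expand_add_X_mul_expand _ _ _ _ (by norm_num), coeff_mk]
  rfl

theorem odd_coeff_four_mul_add_one_T_cube (n : ℕ) : Odd (coeff (4 * n + 1) (T ^ 3)) := by
  rw [← ZMod.intCast_eq_one_iff_odd, ← eq_intCast (Int.castRingHom (ZMod 2)), ← coeff_map,
    map_T_cube_zmod_two, coeff_mul_add_one_expand_add_X_mul_expand _ _ _ _ (by norm_num),
    map_neg, coeff_mk]
  rfl

theorem Int.emultiplicity_two_eq_zero_of_odd {x : ℤ} (hx : Odd x) : emultiplicity 2 x = 0 :=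
  emultiplicity_eq_zero.2 fun h ↦ Int.not_even_iff_odd.2 hx (even_iff_two_dvd.2 h)

theorem emultiplicity_pow_mul_of_prime {α : Type*} [CommMonoidWithZero α] [IsCancelMulZero α]
    {p : α}
    (hp : Prime p) (k : ℕ) (x : α) : emultiplicity p (p ^ k * x) = k + emultiplicity p x := by
  rw [emultiplicity_mul hp, emultiplicity_pow_self_of_prime hp]

theorem stmt6 (n : ℕ) :
    Odd (PowerSeries.coeff (R := ℤ) (4 * n) (T ^ 3)) ∧
    Odd (PowerSeries.coeff (R := ℤ) (4 * n + 1) (T ^ 3)) ∧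
    emultiplicity (2 : ℤ) (PowerSeries.coeff (R := ℤ) (4 * n) (T ^ 3)) = 0 ∧
    emultiplicity (2 : ℤ) (PowerSeries.coeff (R := ℤ) (4 * n + 1) (T ^ 3)) = 0 ∧
    emultiplicity (2 : ℤ) (PowerSeries.coeff (R := ℤ) (4 * n + 3) (T ^ 3)) =
      3 + emultiplicity (2 : ℤ) (PowerSeries.coeff (R := ℤ) n (T ^ 3)) ∧
    emultiplicity (2 : ℤ) (PowerSeries.coeff (R := ℤ) (4 * n + 6) (T ^ 3)) =
      3 + emultiplicity (2 : ℤ) (PowerSeries.coeff (R := ℤ) n (T ^ 3)) := by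
  refine ⟨odd_coeff_four_mul_T_cube n, odd_coeff_four_mul_add_one_T_cube n,
    Int.emultiplicity_two_eq_zero_of_odd (odd_coeff_four_mul_T_cube n),
    Int.emultiplicity_two_eq_zero_of_odd (odd_coeff_four_mul_add_one_T_cube n), ?_, ?_⟩
  · rw [coeff_four_mul_add_three_T_cube, emultiplicity_pow_mul_of_prime Int.prime_two]
    rfl
  · rw [coeff_four_mul_add_six_T_cube, emultiplicity_pow_mul_of_prime Int.prime_two]
    rfl
end

section
/- For every integer k ≥ 3: max{t_2(n) : 0 ≤ n ≤ 2^k} = 2^{2⌊k/2⌋} = t_2(2^{2⌊k/2⌋} - 1) and min{t_2(n) : 0 ≤ n ≤ 2^k} = -2^{2⌊(k-1)/2⌋+1} = t_2(2^{2⌊(k-1)/2⌋+1} - 1). -/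
/-!
Since `ptm (2n) = ptm n` and `ptm (2n+1) = -ptm n`, splitting the convolution
`t₂ n = ∑ ptm i * ptm (n - i)` by the parity of `i` gives `t₂ (2n+1) = -2 t₂ n` and
`t₂ (2n+2) = t₂ (n+1) + t₂ n` (the identity `T(x) = (1 - x) T(x²)`, squared). Hence `|t₂ n| ≤ 2ᵏ`
for `n ≤ 2ᵏ`; unfolding an even argument twice makes the two terms partly cancel,
`t₂ (4i+4) = t₂ (i+1) - t₂ i`, so on even arguments the bound halves to `2ᵏ⁻¹`. The extremes on
`[0, 2ᵏ]` therefore come from odd arguments `2j+1`, where `t₂ = -2 t₂ j`: the maximum at level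
`k+1` is twice the negated minimum at level `k` and vice versa, and both are attained at `2ᵐ - 1`,
where `t₂ (2ᵐ - 1) = (-2)ᵐ`.
-/

open Finset

def ptm (n : ℕ) : ℤ := (-1) ^ (Nat.digits 2 n).sum

noncomputable def t₂ (n : ℕ) : ℤ := PowerSeries.coeff n (T ^ 2)

theorem Finset.sum_range_two_mul {M : Type*} [AddCommMonoid M] (f : ℕ → M) (m : ℕ) :
    ∑ i ∈ range (2 * m), f i = ∑ i ∈ range m, (f (2 * i) + f (2 * i + 1)) := by
  induction m with
  | zero => simp
  | succ m ih => rw [mul_add_one, sum_range_succ, sum_range_succ, ih, sum_range_succ, add_assoc]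

lemma ptm_two_mul (n : ℕ) : ptm (2 * n) = ptm n := by
  rcases n.eq_zero_or_pos with rfl | hn
  · rfl
  · simp [ptm, Nat.digits_def' one_lt_two (by omega : 0 < 2 * n)]

lemma ptm_two_mul_add_one (n : ℕ) : ptm (2 * n + 1) = -ptm n := by
  simp [ptm, pow_add, Nat.mul_add_div]

lemma t₂_eq_sum (n : ℕ) : t₂ n = ∑ i ∈ range (n + 1), ptm i * ptm (n - i) := by
  rw [t₂, sq, PowerSeries.coeff_mul, Nat.sum_antidiagonal_eq_sum_range_succ_mk]
  simp [T, ptm]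

lemma t₂_zero : t₂ 0 = 1 := by
  rw [t₂_eq_sum]; decide

lemma t₂_two : t₂ 2 = -1 := by
  rw [t₂_eq_sum]; decide

lemma t₂_two_mul_add_one (n : ℕ) : t₂ (2 * n + 1) = -2 * t₂ n := by
  rw [t₂_eq_sum, t₂_eq_sum, show 2 * n + 1 + 1 = 2 * (n + 1) by ring, sum_range_two_mul, mul_sum]
  refine sum_congr rfl fun i hi => ?_
  have hin : i ≤ n := Nat.lt_succ_iff.mp (mem_range.mp hi)
  rw [show 2 * n + 1 - 2 * i = 2 * (n - i) + 1 by omega,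
    show 2 * n + 1 - (2 * i + 1) = 2 * (n - i) by omega]
  simp only [ptm_two_mul, ptm_two_mul_add_one]
  ring

lemma t₂_two_mul_add_two (n : ℕ) : t₂ (2 * n + 2) = t₂ (n + 1) + t₂ n := by
  have hsplit : ∀ i ∈ range (n + 1),
      ptm (2 * i) * ptm (2 * (n + 1) - 2 * i) + ptm (2 * i + 1) * ptm (2 * (n + 1) - (2 * i + 1))
        = ptm i * ptm (n + 1 - i) + ptm i * ptm (n - i) := by
    intro i hi
    have hin : i ≤ n := Nat.lt_succ_iff.mp (mem_range.mp hi)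
    rw [show 2 * (n + 1) - 2 * i = 2 * (n + 1 - i) by omega,
      show 2 * (n + 1) - (2 * i + 1) = 2 * (n - i) + 1 by omega]
    simp only [ptm_two_mul, ptm_two_mul_add_one]
    ring
  rw [t₂_eq_sum, sum_range_succ, ← mul_add_one, sum_range_two_mul, sum_congr rfl hsplit,
    sum_add_distrib, t₂_eq_sum (n + 1), sum_range_succ (n := n + 1), t₂_eq_sum n, Nat.sub_self,
    Nat.sub_self, ptm_two_mul]
  ring

lemma t₂_four_mul_add_four (i : ℕ) : t₂ (4 * i + 4) = t₂ (i + 1) - t₂ i := by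
  rw [show 4 * i + 4 = 2 * (2 * i + 1) + 2 by ring, t₂_two_mul_add_two,
    show 2 * i + 1 + 1 = 2 * i + 2 by ring, t₂_two_mul_add_two, t₂_two_mul_add_one]
  ring

lemma t₂_four_mul_add_six (i : ℕ) : t₂ (4 * i + 6) = t₂ i - t₂ (i + 1) := by
  rw [show 4 * i + 6 = 2 * (2 * i + 2) + 2 by ring, t₂_two_mul_add_two,
    show 2 * i + 2 + 1 = 2 * (i + 1) + 1 by ring, t₂_two_mul_add_one, t₂_two_mul_add_two]
  ring

lemma t₂_two_pow_sub_one (m : ℕ) : t₂ (2 ^ m - 1) = (-2) ^ m := by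
  induction m with
  | zero => simpa using t₂_zero
  | succ m ih =>
    rw [show 2 ^ (m + 1) - 1 = 2 * (2 ^ m - 1) + 1 by have := m.one_le_two_pow; omega,
      t₂_two_mul_add_one, ih, pow_succ]
    ring

lemma abs_t₂_le_two_pow {k n : ℕ} (hk : 1 ≤ k) (hn : n ≤ 2 ^ k) : |t₂ n| ≤ 2 ^ k := by
  induction k, hk using Nat.le_induction generalizing n with
  | base =>
    rw [t₂_eq_sum]
    interval_cases n <;> decide
  | succ k hk ih =>
    rw [pow_succ] at hn ⊢
    rcases Nat.even_or_odd' n with ⟨j, rfl | rfl⟩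
    · rcases j with _ | j
      · simpa [t₂_zero] using one_le_mul_of_one_le_of_one_le (one_le_pow₀ one_le_two) one_le_two
      rw [mul_add_one, t₂_two_mul_add_two]
      calc |t₂ (j + 1) + t₂ j| ≤ |t₂ (j + 1)| + |t₂ j| := abs_add_le _ _
        _ ≤ 2 ^ k + 2 ^ k := add_le_add (ih (by omega)) (ih (by omega))
        _ = 2 ^ k * 2 := by ring
    · rw [t₂_two_mul_add_one, abs_mul, abs_neg, abs_two, mul_comm]
      exact mul_le_mul_of_nonneg_right (ih (by omega)) zero_le_two

lemma abs_t₂_le_of_even {k n : ℕ} (hk : 3 ≤ k) (hn : n ≤ 2 ^ k) (he : Even n) :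
    |t₂ n| ≤ 2 ^ (k - 1) := by
  obtain ⟨k, rfl⟩ := Nat.exists_eq_add_of_le' hk
  have hpow : (2 : ℕ) ^ (k + 3) = 4 * 2 ^ (k + 1) := by ring
  have hsum : ∀ i, i + 1 ≤ 2 ^ (k + 1) → |t₂ (i + 1)| + |t₂ i| ≤ 2 ^ (k + 3 - 1) := fun i hi =>
    calc |t₂ (i + 1)| + |t₂ i| ≤ 2 ^ (k + 1) + 2 ^ (k + 1) :=
          add_le_add (abs_t₂_le_two_pow (by omega) hi) (abs_t₂_le_two_pow (by omega) (by omega))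
      _ = 2 ^ (k + 3 - 1) := by rw [show k + 3 - 1 = k + 1 + 1 by omega, pow_succ]; ring
  have hone : (1 : ℤ) ≤ 2 ^ (k + 3 - 1) := one_le_pow₀ one_le_two
  obtain ⟨m, rfl⟩ := he
  rcases Nat.even_or_odd' m with ⟨i, rfl | rfl⟩ <;> rcases i with _ | i
  · simpa [t₂_zero] using hone
  · rw [show 2 * (i + 1) + 2 * (i + 1) = 4 * i + 4 by ring, t₂_four_mul_add_four]
    exact (abs_sub _ _).trans (hsum i (by omega))
  · simpa [t₂_two] using hone
  · rw [show 2 * (i + 1) + 1 + (2 * (i + 1) + 1) = 4 * i + 6 by ring, t₂_four_mul_add_six,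
      abs_sub_comm]
    exact (abs_sub _ _).trans (hsum i (by omega))

lemma t₂_mem_Icc {k n : ℕ} (hk : 3 ≤ k) (hn : n ≤ 2 ^ k) :
    t₂ n ∈ Set.Icc (-2 ^ (2 * ((k - 1) / 2) + 1)) (2 ^ (2 * (k / 2))) := by
  rw [Set.mem_Icc]
  induction k, hk using Nat.le_induction generalizing n with
  | base =>
    rw [t₂_eq_sum]
    interval_cases n <;> decide
  | succ k hk ih =>
    rcases Nat.even_or_odd' n with ⟨j, rfl | rfl⟩
    · have hb := abs_le.mp (abs_t₂_le_of_even (by omega) hn (even_two_mul j))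
      have hmin : (2 : ℤ) ^ (k + 1 - 1) ≤ 2 ^ (2 * ((k + 1 - 1) / 2) + 1) :=
        pow_le_pow_right₀ one_le_two (by omega)
      have hmax : (2 : ℤ) ^ (k + 1 - 1) ≤ 2 ^ (2 * ((k + 1) / 2)) :=
        pow_le_pow_right₀ one_le_two (by omega)
      constructor <;> linarith [hb.1, hb.2]
    · obtain ⟨hlo, hhi⟩ := ih (n := j) (by rw [pow_succ] at hn; omega)
      have hmin : (2 : ℤ) ^ (2 * ((k + 1 - 1) / 2) + 1) = 2 * 2 ^ (2 * (k / 2)) := by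
        rw [Nat.add_sub_cancel, pow_succ']
      have hmax : (2 : ℤ) ^ (2 * ((k + 1) / 2)) = 2 * 2 ^ (2 * ((k - 1) / 2) + 1) := by
        rw [← pow_succ']; congr 1; omega
      rw [t₂_two_mul_add_one, hmin, hmax]
      constructor <;> linarith

theorem stmt10 (k : ℕ) (hk : 3 ≤ k) :
    IsGreatest {x : ℤ | ∃ n : ℕ, n ≤ 2 ^ k ∧ PowerSeries.coeff n (T ^ 2) = x}
        (2 ^ (2 * (k / 2))) ∧
    PowerSeries.coeff (2 ^ (2 * (k / 2)) - 1) (T ^ 2) = 2 ^ (2 * (k / 2)) ∧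
    IsLeast {x : ℤ | ∃ n : ℕ, n ≤ 2 ^ k ∧ PowerSeries.coeff n (T ^ 2) = x}
        (-2 ^ (2 * ((k - 1) / 2) + 1)) ∧
    PowerSeries.coeff (2 ^ (2 * ((k - 1) / 2) + 1) - 1) (T ^ 2) =
      -2 ^ (2 * ((k - 1) / 2) + 1) := by
  have hmax : t₂ (2 ^ (2 * (k / 2)) - 1) = 2 ^ (2 * (k / 2)) := by
    rw [t₂_two_pow_sub_one, Even.neg_pow (even_two_mul _)]
  have hmin : t₂ (2 ^ (2 * ((k - 1) / 2) + 1) - 1) = -2 ^ (2 * ((k - 1) / 2) + 1) := by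
    rw [t₂_two_pow_sub_one, Odd.neg_pow (odd_two_mul_add_one _)]
  have hmax_le : 2 ^ (2 * (k / 2)) - 1 ≤ 2 ^ k :=
    (Nat.sub_le _ _).trans (Nat.pow_le_pow_right two_pos (by omega))
  have hmin_le : 2 ^ (2 * ((k - 1) / 2) + 1) - 1 ≤ 2 ^ k :=
    (Nat.sub_le _ _).trans (Nat.pow_le_pow_right two_pos (by omega))
  refine ⟨⟨⟨_, hmax_le, hmax⟩, ?_⟩, hmax, ⟨⟨_, hmin_le, hmin⟩, ?_⟩, hmin⟩
  · rintro _ ⟨n, hn, rfl⟩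
    exact (t₂_mem_Icc hk hn).2
  · rintro _ ⟨n, hn, rfl⟩
    exact (t₂_mem_Icc hk hn).1
end
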